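/- arXiv:1801.08960 — 4 statements merged into one kernel-verified Lean document; each statement's English description precedes it below -/
import Mathlib

section
/- Let Φ(t,s) be the transition matrix of the linear system x' = A(t)x on ℝ⁺ with ‖Φ(t,s)‖ ≤ K e^{-α(t-s)} for t ≥ s ≥ 0, where K ≥ 1 and α > 0. Let f : ℝ⁺ × ℝⁿ → ℝⁿ be continuous, bounded by μ, and globally Lipschitz in the second variable with constant γ satisfying Kγ/α < 1. Then for each (τ,ξ) ∈ ℝ⁺ × ℝⁿ, the operator Γ on the Banach space of bounded continuous functions φ : ℝ⁺ → ℝⁿ defined by (Γφ)(t) = ∫₀ᵗ Φ(t,s) f(s, x(s,τ,ξ) + φ(s)) ds is a contraction, and hence has a unique fixed point, where x(·,τ,ξ) denotes the solution of x' = A(t)x with x(τ) = ξ. -/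
/-!
The decay estimate `‖Φ(t,s)‖ ≤ K e^{-α(t-s)}` together with `∫₀ᵗ e^{-α(t-s)} ds ≤ 1/α` shows that
`Γ` maps every continuous `φ` to a function bounded by `Kμ/α`, and that `Γ` is Lipschitz for the
sup norm on `[0, ∞)` with constant `Kγ/α < 1`. The continuity of `Γφ` comes from the joint
continuity of `Φ`, which follows from `Φ(t,s) = Φ(t,0) Φ(s,0)⁻¹`. The Banach fixed point theorem
in `BC([0, ∞), ℝⁿ)` then gives the unique fixed point.
-/

open Real MeasureTheory Set Function

lemma continuous_projIci {α : Type*} [LinearOrder α] [TopologicalSpace α] [OrderTopology α]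
    {a : α} : Continuous (projIci a) :=
  (continuous_const.max continuous_id).subtype_mk _

lemma integral_exp_neg_mul_sub_le {α : ℝ} (hα : 0 < α) (t : ℝ) :
    ∫ s in (0:ℝ)..t, exp (-α * (t - s)) ≤ α⁻¹ := by
  have h : ∫ s in (0:ℝ)..t, exp (-α * (t - s)) = α⁻¹ * (1 - exp (-α * t)) := by
    simp_rw [show ∀ s, -α * (t - s) = α * s - α * t from fun s => by ring]
    rw [intervalIntegral.integral_comp_mul_sub (fun s => exp s) hα.ne', integral_exp]
    simp only [sub_self, mul_zero, zero_sub, exp_zero, smul_eq_mul, neg_mul]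
  rw [h]
  exact mul_le_of_le_one_right (inv_nonneg.2 hα.le) (by linarith [exp_pos (-α * t)])

lemma norm_integral_le_div_of_norm_le_mul_exp {E : Type*} [NormedAddCommGroup E]
    [NormedSpace ℝ E] {G : ℝ → E} {C α t : ℝ} (hα : 0 < α) (ht : 0 ≤ t)
    (hG : ∀ s ∈ Icc 0 t, ‖G s‖ ≤ C * exp (-α * (t - s))) :
    ‖∫ s in (0:ℝ)..t, G s‖ ≤ C / α := by
  have hC : 0 ≤ C := by simpa using (norm_nonneg _).trans (hG t ⟨ht, le_rfl⟩)
  calc ‖∫ s in (0:ℝ)..t, G s‖ ≤ ∫ s in (0:ℝ)..t, C * exp (-α * (t - s)) :=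
        intervalIntegral.norm_integral_le_of_norm_le ht
          (ae_of_all _ fun s hs => hG s (Ioc_subset_Icc_self hs))
          ((by fun_prop : Continuous fun s => C * exp (-α * (t - s))).intervalIntegrable _ _)
    _ = C * ∫ s in (0:ℝ)..t, exp (-α * (t - s)) := intervalIntegral.integral_const_mul _ _
    _ ≤ C * α⁻¹ := mul_le_mul_of_nonneg_left (integral_exp_neg_mul_sub_le hα t) hC
    _ = C / α := (div_eq_mul_inv _ _).symm

lemma continuous_uncurry_of_cocycle {E : Type*} [NormedAddCommGroup E] [NormedSpace ℝ E]
    [FiniteDimensional ℝ E] {Φ : ℝ → ℝ → E →L[ℝ] E}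
    (hΦid : ∀ s, Φ s s = ContinuousLinearMap.id ℝ E)
    (hΦcocycle : ∀ t s r, (Φ t s).comp (Φ s r) = Φ t r)
    (hΦcont : ∀ s v, Continuous fun t => Φ t s v) :
    Continuous fun p : ℝ × ℝ => Φ p.1 p.2 := by
  have hleft : Continuous fun t => Φ t 0 := continuous_clm_apply.2 (hΦcont 0)
  let u : ℝ → (E →L[ℝ] E)ˣ := fun s =>
    ⟨Φ s 0, Φ 0 s, (hΦcocycle s 0 s).trans (hΦid s), (hΦcocycle 0 s 0).trans (hΦid 0)⟩
  have hright : Continuous fun s => Φ 0 s := by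
    have : (fun s => Φ 0 s) = fun s => Ring.inverse (Φ s 0) :=
      funext fun s => (Ring.inverse_unit (u s)).symm
    rw [continuous_iff_continuousAt, this]
    exact fun s => (NormedRing.inverse_continuousAt (u s)).comp_of_eq hleft.continuousAt rfl
  have hsplit : (fun p : ℝ × ℝ => Φ p.1 p.2) = fun p => Φ p.1 0 * Φ 0 p.2 :=
    funext fun p => (hΦcocycle p.1 0 p.2).symm
  rw [hsplit]
  exact (hleft.comp continuous_fst).mul (hright.comp continuous_snd)

section Duhamel

variable {E : Type*} [NormedAddCommGroup E] [NormedSpace ℝ E]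

/-- The operator `Γ` of the statement, with `g s v = f(s, x(s,τ,ξ) + v)`. -/
noncomputable def duhamel (Φ : ℝ → ℝ → E →L[ℝ] E) (g : ℝ → E → E) (φ : ℝ → E) (t : ℝ) : E :=
  ∫ s in (0:ℝ)..t, Φ t s (g s (φ s))

variable {Φ : ℝ → ℝ → E →L[ℝ] E} {g : ℝ → E → E} {K α γ μ : ℝ}

lemma nonneg_of_norm_le_mul_exp
    (hΦdecay : ∀ s t, 0 ≤ s → s ≤ t → ‖Φ t s‖ ≤ K * exp (-α * (t - s))) : 0 ≤ K := by
  simpa using (norm_nonneg _).trans (hΦdecay 0 0 le_rfl le_rfl)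

lemma norm_integral_transition_le
    (hΦdecay : ∀ s t, 0 ≤ s → s ≤ t → ‖Φ t s‖ ≤ K * exp (-α * (t - s))) (hα : 0 < α)
    {v : ℝ → E} {C t : ℝ} (ht : 0 ≤ t) (hv : ∀ s ∈ Icc 0 t, ‖v s‖ ≤ C) :
    ‖∫ s in (0:ℝ)..t, Φ t s (v s)‖ ≤ K * C / α := by
  refine norm_integral_le_div_of_norm_le_mul_exp hα ht fun s hs => ?_
  have hΦts := hΦdecay s t hs.1 hs.2
  calc ‖Φ t s (v s)‖ ≤ ‖Φ t s‖ * ‖v s‖ := (Φ t s).le_opNorm _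
    _ ≤ K * exp (-α * (t - s)) * C :=
        mul_le_mul hΦts (hv s hs) (norm_nonneg _) ((norm_nonneg _).trans hΦts)
    _ = K * C * exp (-α * (t - s)) := by ring

lemma norm_duhamel_le
    (hΦdecay : ∀ s t, 0 ≤ s → s ≤ t → ‖Φ t s‖ ≤ K * exp (-α * (t - s))) (hα : 0 < α)
    (hgbdd : ∀ t v, 0 ≤ t → ‖g t v‖ ≤ μ) (φ : ℝ → E) {t : ℝ} (ht : 0 ≤ t) :
    ‖duhamel Φ g φ t‖ ≤ K * μ / α :=
  norm_integral_transition_le hΦdecay hα ht fun s hs => hgbdd s _ hs.1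

lemma continuous_duhamel_integrand (hΦ : Continuous fun p : ℝ × ℝ => Φ p.1 p.2)
    (hg : Continuous fun p : ℝ × E => g p.1 p.2) {φ : ℝ → E} (hφ : Continuous φ) :
    Continuous fun p : ℝ × ℝ => Φ p.1 p.2 (g p.2 (φ p.2)) :=
  hΦ.clm_apply (hg.comp (continuous_snd.prodMk (hφ.comp continuous_snd)))

lemma continuous_duhamel (hΦ : Continuous fun p : ℝ × ℝ => Φ p.1 p.2)
    (hg : Continuous fun p : ℝ × E => g p.1 p.2) {φ : ℝ → E} (hφ : Continuous φ) :
    Continuous (duhamel Φ g φ) :=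
  intervalIntegral.continuous_parametric_intervalIntegral_of_continuous
    (continuous_duhamel_integrand hΦ hg hφ) continuous_id

lemma norm_duhamel_sub_le (hΦ : Continuous fun p : ℝ × ℝ => Φ p.1 p.2)
    (hΦdecay : ∀ s t, 0 ≤ s → s ≤ t → ‖Φ t s‖ ≤ K * exp (-α * (t - s))) (hα : 0 < α)
    (hγ : 0 ≤ γ) (hg : Continuous fun p : ℝ × E => g p.1 p.2)
    (hglip : ∀ t u v, 0 ≤ t → ‖g t u - g t v‖ ≤ γ * ‖u - v‖)
    {φ ψ : ℝ → E} (hφ : Continuous φ) (hψ : Continuous ψ) {D : ℝ}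
    (hD : ∀ s, 0 ≤ s → ‖φ s - ψ s‖ ≤ D) {t : ℝ} (ht : 0 ≤ t) :
    ‖duhamel Φ g φ t - duhamel Φ g ψ t‖ ≤ K * γ / α * D := by
  have hint : ∀ χ : ℝ → E, Continuous χ →
      IntervalIntegrable (fun s => Φ t s (g s (χ s))) volume 0 t := fun χ hχ =>
    ((continuous_duhamel_integrand hΦ hg hχ).comp
      (Continuous.prodMk_right t)).intervalIntegrable _ _
  rw [duhamel, duhamel, ← intervalIntegral.integral_sub (hint φ hφ) (hint ψ hψ)]
  simp_rw [← map_sub]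
  calc _ ≤ K * (γ * D) / α := norm_integral_transition_le hΦdecay hα ht fun s hs =>
          (hglip s _ _ hs.1).trans (by simpa using mul_le_mul_of_nonneg_left (hD s hs.1) hγ)
    _ = K * γ / α * D := by ring

lemma duhamel_congr {φ ψ : ℝ → E} {t : ℝ} (ht : 0 ≤ t) (h : EqOn φ ψ (Icc 0 t)) :
    duhamel Φ g φ t = duhamel Φ g ψ t :=
  intervalIntegral.integral_congr fun s hs => by
    rw [uIcc_of_le ht] at hs
    simp only [h hs]

end Duhamel

section FixedPoint

open BoundedContinuousFunction

variable {E : Type*} [NormedAddCommGroup E] [NormedSpace ℝ E]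
  {Φ : ℝ → ℝ → E →L[ℝ] E} {g : ℝ → E → E} {K α γ μ : ℝ}
  (hΦ : Continuous fun p : ℝ × ℝ => Φ p.1 p.2)
  (hΦdecay : ∀ s t, 0 ≤ s → s ≤ t → ‖Φ t s‖ ≤ K * exp (-α * (t - s))) (hα : 0 < α)
  (hg : Continuous fun p : ℝ × E => g p.1 p.2) (hgbdd : ∀ t v, 0 ≤ t → ‖g t v‖ ≤ μ)

/-- `Γ` on `BC([0, ∞), E)`; functions on `[0, ∞)` are extended to `ℝ` by `IciExtend`, i.e.
constantly on `(-∞, 0]`. -/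
noncomputable def duhamelBCF (φ : Ici (0:ℝ) →ᵇ E) : Ici (0:ℝ) →ᵇ E :=
  ofNormedAddCommGroup (fun t => duhamel Φ g (IciExtend φ) t)
    ((continuous_duhamel hΦ hg (φ.continuous.comp continuous_projIci)).comp continuous_subtype_val)
    (K * μ / α) fun t => norm_duhamel_le hΦdecay hα hgbdd _ t.2

lemma contractingWith_duhamelBCF (hγ : 0 ≤ γ)
    (hglip : ∀ t u v, 0 ≤ t → ‖g t u - g t v‖ ≤ γ * ‖u - v‖) (hsmall : K * γ / α < 1) :
    ContractingWith (K * γ / α).toNNReal (duhamelBCF hΦ hΦdecay hα hg hgbdd) := by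
  have hc : 0 ≤ K * γ / α := by
    have := nonneg_of_norm_le_mul_exp hΦdecay
    positivity
  refine ⟨by simpa using hsmall, LipschitzWith.of_dist_le_mul fun φ ψ => ?_⟩
  rw [Real.coe_toNNReal _ hc, dist_le (by positivity)]
  intro t
  rw [dist_eq_norm]
  refine norm_duhamel_sub_le hΦ hΦdecay hα hγ hg hglip (φ.continuous.comp continuous_projIci)
    (ψ.continuous.comp continuous_projIci) (fun s _ => ?_) t.2
  rw [← dist_eq_norm]
  exact dist_coe_le_dist _

lemma isFixedPt_duhamelBCF {z : ℝ → E} (hz : Continuous z) {C : ℝ}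
    (hC : ∀ t, 0 ≤ t → ‖z t‖ ≤ C) (hfix : ∀ t, 0 ≤ t → z t = duhamel Φ g z t) :
    IsFixedPt (duhamelBCF hΦ hΦdecay hα hg hgbdd)
      (ofNormedAddCommGroup (fun t : Ici (0:ℝ) => z t) (hz.comp continuous_subtype_val) C
        fun t => hC t t.2) := by
  ext t
  refine (duhamel_congr t.2 fun s hs => ?_).trans (hfix t t.2).symm
  exact IciExtend_of_mem _ hs.1

end FixedPoint

section

variable {E : Type*} [NormedAddCommGroup E] [NormedSpace ℝ E]
  {Φ : ℝ → ℝ → E →L[ℝ] E} {g : ℝ → E → E} {K α γ μ : ℝ}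

theorem exists_duhamel_fixed [CompleteSpace E] (hΦ : Continuous fun p : ℝ × ℝ => Φ p.1 p.2)
    (hΦdecay : ∀ s t, 0 ≤ s → s ≤ t → ‖Φ t s‖ ≤ K * exp (-α * (t - s))) (hα : 0 < α)
    (hg : Continuous fun p : ℝ × E => g p.1 p.2) (hgbdd : ∀ t v, 0 ≤ t → ‖g t v‖ ≤ μ)
    (hγ : 0 ≤ γ)
    (hglip : ∀ t u v, 0 ≤ t → ‖g t u - g t v‖ ≤ γ * ‖u - v‖) (hsmall : K * γ / α < 1) :
    ∃ z : ℝ → E, Continuous z ∧ (∃ C, ∀ t, 0 ≤ t → ‖z t‖ ≤ C) ∧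
      ∀ t, 0 ≤ t → z t = duhamel Φ g z t := by
  have hΓ := contractingWith_duhamelBCF hΦ hΦdecay hα hg hgbdd hγ hglip hsmall
  obtain ⟨z₀, hz₀⟩ : ∃ z₀, IsFixedPt (duhamelBCF hΦ hΦdecay hα hg hgbdd) z₀ :=
    ⟨_, hΓ.fixedPoint_isFixedPt⟩
  exact ⟨IciExtend z₀, z₀.continuous.comp continuous_projIci,
    ⟨‖z₀‖, fun t _ => z₀.norm_coe_le_norm _⟩,
    fun t ht => (IciExtend_of_mem _ ht).trans (DFunLike.congr_fun hz₀ ⟨t, ht⟩).symm⟩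

theorem eqOn_of_duhamel_fixed (hΦ : Continuous fun p : ℝ × ℝ => Φ p.1 p.2)
    (hΦdecay : ∀ s t, 0 ≤ s → s ≤ t → ‖Φ t s‖ ≤ K * exp (-α * (t - s))) (hα : 0 < α)
    (hg : Continuous fun p : ℝ × E => g p.1 p.2) (hgbdd : ∀ t v, 0 ≤ t → ‖g t v‖ ≤ μ)
    (hγ : 0 ≤ γ)
    (hglip : ∀ t u v, 0 ≤ t → ‖g t u - g t v‖ ≤ γ * ‖u - v‖) (hsmall : K * γ / α < 1)
    {z z' : ℝ → E}
    (hz : Continuous z ∧ (∃ C, ∀ t, 0 ≤ t → ‖z t‖ ≤ C) ∧ ∀ t, 0 ≤ t → z t = duhamel Φ g z t)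
    (hz' : Continuous z' ∧ (∃ C, ∀ t, 0 ≤ t → ‖z' t‖ ≤ C) ∧
      ∀ t, 0 ≤ t → z' t = duhamel Φ g z' t) :
    EqOn z z' (Ici 0) := by
  obtain ⟨hzc, ⟨C, hC⟩, hzfix⟩ := hz
  obtain ⟨hzc', ⟨C', hC'⟩, hzfix'⟩ := hz'
  have := (contractingWith_duhamelBCF hΦ hΦdecay hα hg hgbdd hγ hglip hsmall).fixedPoint_unique'
    (isFixedPt_duhamelBCF hΦ hΦdecay hα hg hgbdd hzc hC hzfix)
    (isFixedPt_duhamelBCF hΦ hΦdecay hα hg hgbdd hzc' hC' hzfix')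
  exact fun t ht => DFunLike.congr_fun this ⟨t, ht⟩

end

theorem stmt0_general (n : ℕ) (K α γ μ : ℝ)
    (hα : 0 < α) (hγ : 0 < γ)
    (A : ℝ → (EuclideanSpace ℝ (Fin n)) →L[ℝ] (EuclideanSpace ℝ (Fin n)))
    (Φ : ℝ → ℝ → ((EuclideanSpace ℝ (Fin n)) →L[ℝ] (EuclideanSpace ℝ (Fin n))))
    (hΦid : ∀ s, Φ s s = ContinuousLinearMap.id ℝ (EuclideanSpace ℝ (Fin n)))
    (hΦderiv : ∀ s ξ t, HasDerivAt (fun r => Φ r s ξ) (A t (Φ t s ξ)) t)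
    (hΦcocycle : ∀ t s r, (Φ t s).comp (Φ s r) = Φ t r)
    (hΦdecay : ∀ s t, 0 ≤ s → s ≤ t → ‖Φ t s‖ ≤ K * Real.exp (-α * (t - s)))
    (f : ℝ → (EuclideanSpace ℝ (Fin n)) → (EuclideanSpace ℝ (Fin n)))
    (hfcont : Continuous fun p : ℝ × (EuclideanSpace ℝ (Fin n)) => f p.1 p.2)
    (hflip : ∀ t u v, 0 ≤ t → ‖f t u - f t v‖ ≤ γ * ‖u - v‖)
    (hfbdd : ∀ t u, 0 ≤ t → ‖f t u‖ ≤ μ)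
    (hsmall : K * γ / α < 1)
    (τ : ℝ) (ξ : (EuclideanSpace ℝ (Fin n))) :
    ∃ c, 0 ≤ c ∧ c < 1 ∧
      (∀ (φ ψ : ℝ → (EuclideanSpace ℝ (Fin n))) (D : ℝ), Continuous φ → Continuous ψ →
        (∀ s, 0 ≤ s → ‖φ s - ψ s‖ ≤ D) →
        ∀ t, 0 ≤ t →
          ‖(∫ s in (0:ℝ)..t, Φ t s (f s (Φ s τ ξ + φ s))) -
            ∫ s in (0:ℝ)..t, Φ t s (f s (Φ s τ ξ + ψ s))‖ ≤ c * D) ∧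
      (∃ z : ℝ → (EuclideanSpace ℝ (Fin n)),
        (Continuous z ∧ (∃ C, ∀ t, 0 ≤ t → ‖z t‖ ≤ C) ∧
          ∀ t, 0 ≤ t → z t = ∫ s in (0:ℝ)..t, Φ t s (f s (Φ s τ ξ + z s))) ∧
        ∀ z' : ℝ → (EuclideanSpace ℝ (Fin n)),
          (Continuous z' ∧ (∃ C, ∀ t, 0 ≤ t → ‖z' t‖ ≤ C) ∧
            ∀ t, 0 ≤ t → z' t = ∫ s in (0:ℝ)..t, Φ t s (f s (Φ s τ ξ + z' s))) →
          ∀ t, 0 ≤ t → z t = z' t) := by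
  have hΦapply : ∀ s v, Continuous fun r => Φ r s v := fun s v =>
    continuous_iff_continuousAt.2 fun t => (hΦderiv s v t).continuousAt
  have hΦ := continuous_uncurry_of_cocycle hΦid hΦcocycle hΦapply
  set g : ℝ → EuclideanSpace ℝ (Fin n) → EuclideanSpace ℝ (Fin n) :=
    fun s v => f s (Φ s τ ξ + v)
  have hg : Continuous fun p : ℝ × EuclideanSpace ℝ (Fin n) => g p.1 p.2 :=
    hfcont.comp (continuous_fst.prodMk (((hΦapply τ ξ).comp continuous_fst).add continuous_snd))
  have hglip : ∀ t u v, 0 ≤ t → ‖g t u - g t v‖ ≤ γ * ‖u - v‖ := fun t u v ht => by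
    simpa only [g, add_sub_add_left_eq_sub] using hflip t (Φ t τ ξ + u) (Φ t τ ξ + v) ht
  have hgbdd : ∀ t v, 0 ≤ t → ‖g t v‖ ≤ μ := fun t v => hfbdd t _
  have hK := nonneg_of_norm_le_mul_exp hΦdecay
  refine ⟨K * γ / α, by positivity, hsmall, fun φ ψ D hφ hψ hD t ht =>
    norm_duhamel_sub_le hΦ hΦdecay hα hγ.le hg hglip hφ hψ hD ht, ?_⟩
  obtain ⟨z, hz⟩ := exists_duhamel_fixed hΦ hΦdecay hα hg hgbdd hγ.le hglip hsmall
  exact ⟨z, hz, fun z' hz' _ ht =>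
    eqOn_of_duhamel_fixed hΦ hΦdecay hα hg hgbdd hγ.le hglip hsmall hz hz' ht⟩

theorem stmt0 (n : ℕ) (K α γ μ M : ℝ)
    (hK : 1 ≤ K) (hα : 0 < α) (hγ : 0 < γ) (hμ : 0 < μ) (hM : 0 < M)
    (A : ℝ → (EuclideanSpace ℝ (Fin n)) →L[ℝ] (EuclideanSpace ℝ (Fin n)))
    (hAcont : Continuous A) (hAbdd : ∀ t, 0 ≤ t → ‖A t‖ ≤ M)
    (Φ : ℝ → ℝ → ((EuclideanSpace ℝ (Fin n)) →L[ℝ] (EuclideanSpace ℝ (Fin n))))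
    (hΦid : ∀ s, Φ s s = ContinuousLinearMap.id ℝ (EuclideanSpace ℝ (Fin n)))
    (hΦderiv : ∀ s ξ t, HasDerivAt (fun r => Φ r s ξ) (A t (Φ t s ξ)) t)
    (hΦcocycle : ∀ t s r, (Φ t s).comp (Φ s r) = Φ t r)
    (hΦdecay : ∀ s t, 0 ≤ s → s ≤ t → ‖Φ t s‖ ≤ K * Real.exp (-α * (t - s)))
    (f : ℝ → (EuclideanSpace ℝ (Fin n)) → (EuclideanSpace ℝ (Fin n)))
    (hfcont : Continuous fun p : ℝ × (EuclideanSpace ℝ (Fin n)) => f p.1 p.2)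
    (hflip : ∀ t u v, 0 ≤ t → ‖f t u - f t v‖ ≤ γ * ‖u - v‖)
    (hfbdd : ∀ t u, 0 ≤ t → ‖f t u‖ ≤ μ)
    (hsmall : K * γ / α < 1)
    (τ : ℝ) (hτ : 0 ≤ τ) (ξ : (EuclideanSpace ℝ (Fin n))) :
    ∃ c, 0 ≤ c ∧ c < 1 ∧
      (∀ (φ ψ : ℝ → (EuclideanSpace ℝ (Fin n))) (D : ℝ), Continuous φ → Continuous ψ →
        (∀ s, 0 ≤ s → ‖φ s - ψ s‖ ≤ D) →
        ∀ t, 0 ≤ t →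
          ‖(∫ s in (0:ℝ)..t, Φ t s (f s (Φ s τ ξ + φ s))) -
            ∫ s in (0:ℝ)..t, Φ t s (f s (Φ s τ ξ + ψ s))‖ ≤ c * D) ∧
      (∃ z : ℝ → (EuclideanSpace ℝ (Fin n)),
        (Continuous z ∧ (∃ C, ∀ t, 0 ≤ t → ‖z t‖ ≤ C) ∧
          ∀ t, 0 ≤ t → z t = ∫ s in (0:ℝ)..t, Φ t s (f s (Φ s τ ξ + z s))) ∧
        ∀ z' : ℝ → (EuclideanSpace ℝ (Fin n)),
          (Continuous z' ∧ (∃ C, ∀ t, 0 ≤ t → ‖z' t‖ ≤ C) ∧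
            ∀ t, 0 ≤ t → z' t = ∫ s in (0:ℝ)..t, Φ t s (f s (Φ s τ ξ + z' s))) →
          ∀ t, 0 ≤ t → z t = z' t) :=
  stmt0_general n K α γ μ hα hγ A Φ hΦid hΦderiv hΦcocycle hΦdecay f hfcont hflip hfbdd hsmall τ ξ
end

section
/- Assume ‖Φ(t,s)‖ ≤ K e^{-α(t-s)} for t ≥ s ≥ 0, f is γ-Lipschitz in y, and Kγ/α < 1. If u and v are both equilibria of y' = A(t)y + f(t,y) (i.e., A(t)u + f(t,u) = 0 and A(t)v + f(t,v) = 0 for all t ≥ 0), then u = v. -/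
open Real Filter Topology ContinuousLinearMap

/-! With `w = u - v`, the two equilibrium equations give `A s w = -(f s u - f s v)`, so
`‖A s w‖ ≤ γ ‖w‖`. Since `∂ₛ Φ t s w = -Φ t s (A s w)`, the decay estimate bounds the drift
`‖w - Φ t 0 w‖` by `∫₀ᵗ K e^{-α(t-s)} γ ‖w‖ ds ≤ (Kγ/α) ‖w‖`, while `‖Φ t 0 w‖ ≤ K e^{-αt} ‖w‖`.
Letting `t → ∞` gives `‖w‖ ≤ (Kγ/α) ‖w‖`, hence `w = 0`. -/

theorem ContinuousLinearMap.hasDerivAt_of_forall_hasDerivAt_apply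
    {𝕜 E F : Type*} [NontriviallyNormedField 𝕜] [CompleteSpace 𝕜]
    [NormedAddCommGroup E] [NormedSpace 𝕜 E] [FiniteDimensional 𝕜 E]
    [NormedAddCommGroup F] [NormedSpace 𝕜 F]
    {L : 𝕜 → E →L[𝕜] F} {L' : E →L[𝕜] F} {t : 𝕜}
    (h : ∀ ξ, HasDerivAt (fun s => L s ξ) (L' ξ) t) : HasDerivAt L L' t := by
  let b := Module.finBasis 𝕜 E
  let coord (i : Fin (Module.finrank 𝕜 E)) : StrongDual 𝕜 E :=
    LinearMap.toContinuousLinearMap (b.coord i)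
  have expand (T : E →L[𝕜] F) : T = ∑ i, smulRightL 𝕜 E F (coord i) (T (b i)) := by
    ext ξ
    conv_lhs => rw [← b.sum_repr ξ]
    rw [map_sum]
    simp only [map_smul, smulRightL_apply_apply, sum_apply, smulRight_apply,
      LinearMap.coe_toContinuousLinearMap', Module.Basis.coord_apply, coord]
  rw [funext fun s => expand (L s), expand L']
  exact HasDerivAt.fun_sum fun i _ =>
    (smulRightL 𝕜 E F (coord i)).hasFDerivAt.comp_hasDerivAt t (h (b i))

theorem HasDerivAt.of_mul_eq_one {𝕜 R : Type*} [NontriviallyNormedField 𝕜] [NormedRing R]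
    [HasSummableGeomSeries R] [NormedAlgebra 𝕜 R] {F G : 𝕜 → R} {F' : R} {t : 𝕜}
    (hGF : ∀ s, G s * F s = 1) (hFG : ∀ s, F s * G s = 1) (hF : HasDerivAt F F' t) :
    HasDerivAt G (-(G t * F' * G t)) t := by
  have hG : Ring.inverse ∘ F = G := funext fun s => Ring.inverse_unit ⟨F s, G s, hFG s, hGF s⟩
  have := (hasFDerivAt_ringInverse (𝕜 := 𝕜) (⟨F t, G t, hFG t, hGF t⟩ : Rˣ)).comp_hasDerivAt t hF
  simpa [hG] using this

/-- `Φ t s` is the transition operator from time `s` to time `t` of `y' = A t y`. -/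
structure IsEvolutionFamily {E : Type*} [NormedAddCommGroup E] [NormedSpace ℝ E]
    (A : ℝ → E →L[ℝ] E) (Φ : ℝ → ℝ → E →L[ℝ] E) : Prop where
  self_eq_id : ∀ s, Φ s s = ContinuousLinearMap.id ℝ E
  hasDerivAt_left : ∀ s ξ t, HasDerivAt (fun r => Φ r s ξ) (A t (Φ t s ξ)) t
  comp_eq : ∀ t s r, (Φ t s).comp (Φ s r) = Φ t r

namespace IsEvolutionFamily

variable {E : Type*} [NormedAddCommGroup E] [NormedSpace ℝ E]
  {A : ℝ → E →L[ℝ] E} {Φ : ℝ → ℝ → E →L[ℝ] E}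

theorem mul_eq (hΦ : IsEvolutionFamily A Φ) (t s r : ℝ) : Φ t s * Φ s r = Φ t r :=
  hΦ.comp_eq t s r

theorem mul_swap_eq_one (hΦ : IsEvolutionFamily A Φ) (t s : ℝ) : Φ t s * Φ s t = 1 := by
  rw [hΦ.mul_eq, hΦ.self_eq_id, one_def]

variable [FiniteDimensional ℝ E]

theorem hasDerivAt_right (hΦ : IsEvolutionFamily A Φ) (t s : ℝ) (ξ : E) :
    HasDerivAt (fun r => Φ t r ξ) (-Φ t s (A s ξ)) s := by
  -- `Φ t r = Φ t 0 * Φ 0 r`, and `Φ 0 r` is the inverse of `Φ r 0`, whose derivative we know.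
  have hF : HasDerivAt (fun r => Φ r 0) (A s * Φ s 0) s :=
    hasDerivAt_of_forall_hasDerivAt_apply fun η => hΦ.hasDerivAt_left 0 η s
  have hG := hF.of_mul_eq_one (G := fun r => Φ 0 r) (hΦ.mul_swap_eq_one 0) (hΦ.mul_swap_eq_one · 0)
  have h := (Φ t 0).hasFDerivAt.comp_hasDerivAt s (hG.clm_apply (hasDerivAt_const s ξ))
  convert h using 1
  · funext r
    simp [← hΦ.mul_eq t 0 r]
  · have key : Φ t 0 * (Φ 0 s * (A s * Φ s 0) * Φ 0 s) = Φ t s * A s := by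
      rw [mul_assoc, mul_assoc, hΦ.mul_swap_eq_one, mul_one, ← mul_assoc, hΦ.mul_eq]
    simp only [map_zero, add_zero, neg_apply, map_neg]
    rw [← mul_apply_eq_comp, ← key, mul_apply_eq_comp]

theorem norm_sub_apply_le (hΦ : IsEvolutionFamily A Φ) {K α c t : ℝ} {w : E} (hα : α ≠ 0)
    (hdecay : ∀ s t, 0 ≤ s → s ≤ t → ‖Φ t s‖ ≤ K * exp (-α * (t - s)))
    (hA : ∀ s, 0 ≤ s → ‖A s w‖ ≤ c) (ht : 0 ≤ t) :
    ‖w - Φ t 0 w‖ ≤ K * c / α * (1 - exp (-α * t)) := by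
  -- `B s = ∫₀ˢ K c e^{-α(t-r)} dr` dominates the drift `‖Φ t s w - Φ t 0 w‖`.
  set B : ℝ → ℝ := fun s => K * c / α * (exp (-α * (t - s)) - exp (-α * t))
  have hB (s : ℝ) : HasDerivAt B (K * c * exp (-α * (t - s))) s := by
    refine (((((hasDerivAt_id s).const_sub t).const_mul (-α)).exp.sub_const
      (exp (-α * t))).const_mul (K * c / α)).congr_deriv ?_
    simp only [id]
    field_simp
  have hbound := image_norm_le_of_norm_deriv_right_le_deriv_boundary (a := 0) (b := t)
    (f := fun s => Φ t s w - Φ t 0 w)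
    (fun s _ => ((hΦ.hasDerivAt_right t s w).sub_const _).continuousAt.continuousWithinAt)
    (fun s _ => ((hΦ.hasDerivAt_right t s w).sub_const _).hasDerivWithinAt)
    (by simp [B]) hB (fun s hs => ?_) ⟨ht, le_rfl⟩
  · simpa [B, hΦ.self_eq_id] using hbound
  · rw [norm_neg]
    calc ‖Φ t s (A s w)‖ ≤ ‖Φ t s‖ * ‖A s w‖ := (Φ t s).le_opNorm _
      _ ≤ K * exp (-α * (t - s)) * c :=
        mul_le_mul (hdecay s t hs.1 hs.2.le) (hA s hs.1) (norm_nonneg _)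
          ((norm_nonneg _).trans (hdecay s t hs.1 hs.2.le))
      _ = K * c * exp (-α * (t - s)) := by ring

end IsEvolutionFamily

theorem le_of_forall_le_exp_mul_add {x K α c : ℝ} (hα : 0 < α)
    (h : ∀ t, 0 ≤ t → x ≤ K * exp (-α * t) * x + c * (1 - exp (-α * t))) : x ≤ c := by
  have hexp : Tendsto (fun t => exp (-α * t)) atTop (𝓝 0) :=
    tendsto_exp_atBot.comp (tendsto_id.const_mul_atTop_of_neg (neg_neg_of_pos hα))
  have hlim : Tendsto (fun t => K * exp (-α * t) * x + c * (1 - exp (-α * t))) atTop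
      (𝓝 (K * 0 * x + c * (1 - 0))) :=
    ((hexp.const_mul K).mul_const x).add ((hexp.const_sub 1).const_mul c)
  rw [mul_zero, zero_mul, zero_add, sub_zero, mul_one] at hlim
  refine ge_of_tendsto hlim ?_
  filter_upwards [eventually_ge_atTop 0] using h

theorem stmt10_general (n : ℕ) (K α γ : ℝ)
    (hα : 0 < α)
    (A : ℝ → (EuclideanSpace ℝ (Fin n)) →L[ℝ] (EuclideanSpace ℝ (Fin n)))
    (Φ : ℝ → ℝ → ((EuclideanSpace ℝ (Fin n)) →L[ℝ] (EuclideanSpace ℝ (Fin n))))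
    (hΦid : ∀ s, Φ s s = ContinuousLinearMap.id ℝ (EuclideanSpace ℝ (Fin n)))
    (hΦderiv : ∀ s ξ t, HasDerivAt (fun r => Φ r s ξ) (A t (Φ t s ξ)) t)
    (hΦcocycle : ∀ t s r, (Φ t s).comp (Φ s r) = Φ t r)
    (hΦdecay : ∀ s t, 0 ≤ s → s ≤ t → ‖Φ t s‖ ≤ K * Real.exp (-α * (t - s)))
    (f : ℝ → (EuclideanSpace ℝ (Fin n)) → (EuclideanSpace ℝ (Fin n)))
    (hflip : ∀ t u v, 0 ≤ t → ‖f t u - f t v‖ ≤ γ * ‖u - v‖)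
    (hsmall : K * γ / α < 1)
    (u v : (EuclideanSpace ℝ (Fin n)))
    (hu : ∀ t, 0 ≤ t → A t u + f t u = 0)
    (hv : ∀ t, 0 ≤ t → A t v + f t v = 0) :
    u = v := by
  have hΦ : IsEvolutionFamily A Φ := ⟨hΦid, hΦderiv, hΦcocycle⟩
  set w := u - v
  have hAw (s : ℝ) (hs : 0 ≤ s) : ‖A s w‖ ≤ γ * ‖w‖ := by
    have : A s w = -(f s u - f s v) := by
      rw [map_sub, eq_neg_of_add_eq_zero_left (hu s hs), eq_neg_of_add_eq_zero_left (hv s hs)]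
      abel
    rw [this, norm_neg]
    exact hflip s u v hs
  have hw : ‖w‖ ≤ K * γ / α * ‖w‖ := le_of_forall_le_exp_mul_add hα fun t ht =>
    calc ‖w‖ ≤ ‖Φ t 0 w‖ + ‖w - Φ t 0 w‖ := norm_le_insert' _ _
      _ ≤ K * exp (-α * t) * ‖w‖ + K * (γ * ‖w‖) / α * (1 - exp (-α * t)) :=
        add_le_add ((Φ t 0).le_of_opNorm_le (by simpa using hΦdecay 0 t le_rfl ht) w)
          (hΦ.norm_sub_apply_le hα.ne' hΦdecay hAw ht)
      _ = K * exp (-α * t) * ‖w‖ + K * γ / α * ‖w‖ * (1 - exp (-α * t)) := by ring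
  have hw0 : ‖w‖ = 0 := le_antisymm (by nlinarith [norm_nonneg w]) (norm_nonneg w)
  exact sub_eq_zero.mp (norm_eq_zero.mp hw0)

theorem stmt10 (n : ℕ) (K α γ μ M : ℝ)
    (hK : 1 ≤ K) (hα : 0 < α) (hγ : 0 < γ) (hμ : 0 < μ) (hM : 0 < M)
    (A : ℝ → (EuclideanSpace ℝ (Fin n)) →L[ℝ] (EuclideanSpace ℝ (Fin n)))
    (hAcont : Continuous A) (hAbdd : ∀ t, 0 ≤ t → ‖A t‖ ≤ M)
    (Φ : ℝ → ℝ → ((EuclideanSpace ℝ (Fin n)) →L[ℝ] (EuclideanSpace ℝ (Fin n))))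
    (hΦid : ∀ s, Φ s s = ContinuousLinearMap.id ℝ (EuclideanSpace ℝ (Fin n)))
    (hΦderiv : ∀ s ξ t, HasDerivAt (fun r => Φ r s ξ) (A t (Φ t s ξ)) t)
    (hΦcocycle : ∀ t s r, (Φ t s).comp (Φ s r) = Φ t r)
    (hΦdecay : ∀ s t, 0 ≤ s → s ≤ t → ‖Φ t s‖ ≤ K * Real.exp (-α * (t - s)))
    (f : ℝ → (EuclideanSpace ℝ (Fin n)) → (EuclideanSpace ℝ (Fin n)))
    (hfcont : Continuous fun p : ℝ × (EuclideanSpace ℝ (Fin n)) => f p.1 p.2)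
    (hflip : ∀ t u v, 0 ≤ t → ‖f t u - f t v‖ ≤ γ * ‖u - v‖)
    (hfbdd : ∀ t u, 0 ≤ t → ‖f t u‖ ≤ μ)
    (hsmall : K * γ / α < 1)
    (u v : (EuclideanSpace ℝ (Fin n)))
    (hu : ∀ t, 0 ≤ t → A t u + f t u = 0)
    (hv : ∀ t, 0 ≤ t → A t v + f t v = 0) :
    u = v :=
  stmt10_general n K α γ hα A Φ hΦid hΦderiv hΦcocycle hΦdecay f hflip hsmall u v hu hv
end

section
/- Under hypotheses (P1)–(P3) and Kγ/α < 1, if ȳ ≠ 0 is an equilibrium of y' = A(t)y + f(t,y), then G(t,ȳ) = Φ(t,0)ȳ for all t ≥ 0, and consequently G(t,ȳ) → 0 as t → +∞. -/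
/-!
Backward uniqueness for the Lipschitz field `A t x + f t x` forces the solution that reaches the
equilibrium `ȳ` at time `t` to be constant on `[0, t]`. The integrand is then
`Φ t s (f s ȳ) = -Φ t s (A s ȳ) = ∂ₛ (Φ t s ȳ)`, so the integral telescopes to `ȳ - Φ t 0 ȳ`,
and `‖Φ t 0‖ ≤ K e^{-αt}` gives the limit.
-/

open Real MeasureTheory Filter Topology

section Evolution

variable {E : Type*} [NormedAddCommGroup E] [NormedSpace ℝ E]
  {A : ℝ → E →L[ℝ] E} {Φ : ℝ → ℝ → E →L[ℝ] E}

theorem hasDerivAt_clm_of_forall_apply [FiniteDimensional ℝ E] {F : Type*} [NormedAddCommGroup F]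
    [NormedSpace ℝ F] {B : ℝ → E →L[ℝ] F} {B' : E →L[ℝ] F} {t : ℝ}
    (h : ∀ ξ, HasDerivAt (fun s => B s ξ) (B' ξ) t) : HasDerivAt B B' t := by
  let e₁ := ContinuousLinearEquiv.ofFinrankEq
    (Module.finrank_fin_fun ℝ (n := Module.finrank ℝ E)).symm
  let e : (E →L[ℝ] F) ≃L[ℝ] (Fin (Module.finrank ℝ E) → F) :=
    (e₁.arrowCongr (1 : F ≃L[ℝ] F)).trans (ContinuousLinearEquiv.piRing _)
  have he : HasDerivAt (fun s => e (B s)) (e B') t := hasDerivAt_pi.2 fun i => h _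
  simpa [Function.comp_def] using e.symm.hasFDerivAt.comp_hasDerivAt t he

theorem evolution_mul (hΦcocycle : ∀ t s r, (Φ t s).comp (Φ s r) = Φ t r) (t s r : ℝ) :
    Φ t s * Φ s r = Φ t r :=
  hΦcocycle t s r

def evolutionUnit (hΦid : ∀ s, Φ s s = 1) (hΦcocycle : ∀ t s r, (Φ t s).comp (Φ s r) = Φ t r)
    (s t : ℝ) : (E →L[ℝ] E)ˣ where
  val := Φ s t
  inv := Φ t s
  val_inv := by rw [evolution_mul hΦcocycle, hΦid]
  inv_val := by rw [evolution_mul hΦcocycle, hΦid]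

theorem hasDerivAt_evolution_left [FiniteDimensional ℝ E]
    (hΦderiv : ∀ s ξ t, HasDerivAt (fun r => Φ r s ξ) (A t (Φ t s ξ)) t) (s t : ℝ) :
    HasDerivAt (fun r => Φ r s) (A t * Φ t s) t :=
  hasDerivAt_clm_of_forall_apply fun ξ => hΦderiv s ξ t

-- `Φ t r = (Φ r t)⁻¹`, so this is the derivative of the ring inverse.
theorem hasDerivAt_evolution_right [FiniteDimensional ℝ E] (hΦid : ∀ s, Φ s s = 1)
    (hΦderiv : ∀ s ξ t, HasDerivAt (fun r => Φ r s ξ) (A t (Φ t s ξ)) t)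
    (hΦcocycle : ∀ t s r, (Φ t s).comp (Φ s r) = Φ t r) (t s : ℝ) :
    HasDerivAt (fun r => Φ t r) (-(Φ t s * A s)) s := by
  have hinv : (fun r => Ring.inverse (Φ r t)) = fun r => Φ t r :=
    funext fun r => Ring.inverse_unit (evolutionUnit hΦid hΦcocycle r t)
  have h := (hasFDerivAt_ringInverse (𝕜 := ℝ) (evolutionUnit hΦid hΦcocycle s t)).comp_hasDerivAt
    s (hasDerivAt_evolution_left hΦderiv t s)
  rw [Function.comp_def, hinv] at h
  refine h.congr_deriv ?_
  change -(Φ t s * (A s * Φ s t) * Φ t s) = _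
  rw [mul_assoc, mul_assoc, evolution_mul hΦcocycle, hΦid, mul_one]

theorem integral_evolution_apply_generator [FiniteDimensional ℝ E] (hAcont : Continuous A)
    (hΦid : ∀ s, Φ s s = 1) (hΦderiv : ∀ s ξ t, HasDerivAt (fun r => Φ r s ξ) (A t (Φ t s ξ)) t)
    (hΦcocycle : ∀ t s r, (Φ t s).comp (Φ s r) = Φ t r) (t a b : ℝ) (ξ : E) :
    ∫ s in a..b, Φ t s (A s ξ) = Φ t a ξ - Φ t b ξ := by
  have hderiv : ∀ s, HasDerivAt (fun r => Φ t r ξ) (-Φ t s (A s ξ)) s := fun s => by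
    simpa using (hasDerivAt_evolution_right hΦid hΦderiv hΦcocycle t s).clm_apply
      (hasDerivAt_const s ξ)
  have hcont : Continuous fun s => Φ t s (A s ξ) :=
    (continuous_iff_continuousAt.2 fun s =>
      (hasDerivAt_evolution_right hΦid hΦderiv hΦcocycle t s).continuousAt).clm_apply
      (hAcont.clm_apply continuous_const)
  calc ∫ s in a..b, Φ t s (A s ξ) = -∫ s in a..b, -Φ t s (A s ξ) := by
        rw [intervalIntegral.integral_neg, neg_neg]
    _ = Φ t a ξ - Φ t b ξ := by
        rw [intervalIntegral.integral_eq_sub_of_hasDerivAt (fun s _ => hderiv s)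
          (hcont.neg.intervalIntegrable a b), neg_sub]

theorem tendsto_evolution_apply_atTop {K α : ℝ} (hα : 0 < α)
    (hΦdecay : ∀ s t, 0 ≤ s → s ≤ t → ‖Φ t s‖ ≤ K * exp (-α * (t - s))) {s : ℝ} (hs : 0 ≤ s)
    (ξ : E) : Tendsto (fun t => Φ t s ξ) atTop (𝓝 0) := by
  have hexp : Tendsto (fun t => K * exp (-α * (t - s)) * ‖ξ‖) atTop (𝓝 0) := by
    have h : Tendsto (fun t => -α * (t - s)) atTop atBot :=
      (tendsto_atTop_add_const_right _ (-s) tendsto_id).const_mul_atTop_of_neg (neg_lt_zero.2 hα)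
    simpa using ((tendsto_exp_atBot.comp h).const_mul K).mul_const ‖ξ‖
  refine squeeze_zero_norm' ?_ hexp
  filter_upwards [eventually_ge_atTop s] with t ht
  exact (Φ t s).le_of_opNorm_le (hΦdecay s t hs ht) ξ

end Evolution

theorem lipschitzWith_clm_add {E F : Type*} [NormedAddCommGroup E] [NormedSpace ℝ E]
    [NormedAddCommGroup F] [NormedSpace ℝ F] {B : E →L[ℝ] F} {g : E → F} {M γ : ℝ}
    (hB : ‖B‖ ≤ M) (hg : ∀ u v, ‖g u - g v‖ ≤ γ * ‖u - v‖) :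
    LipschitzWith (M + γ).toNNReal fun x => B x + g x := by
  refine LipschitzWith.of_dist_le' fun u v => ?_
  rw [dist_eq_norm, dist_eq_norm]
  calc ‖B u + g u - (B v + g v)‖ = ‖B (u - v) + (g u - g v)‖ := by rw [map_sub]; abel_nf
    _ ≤ ‖B (u - v)‖ + ‖g u - g v‖ := norm_add_le _ _
    _ ≤ M * ‖u - v‖ + γ * ‖u - v‖ := add_le_add (B.le_of_opNorm_le hB _) (hg u v)
    _ = (M + γ) * ‖u - v‖ := by ring

theorem ODE_solution_eqOn_equilibrium_left {E : Type*} [NormedAddCommGroup E] [NormedSpace ℝ E]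
    {v : ℝ → E → E} {L : NNReal} {a b : ℝ} {x : ℝ → E} {ξ : E}
    (hv : ∀ t ∈ Set.Ioc a b, LipschitzWith L (v t))
    (hx : ∀ t ∈ Set.Icc a b, HasDerivAt x (v t (x t)) t)
    (hξ : ∀ t ∈ Set.Ioc a b, v t ξ = 0) (hb : x b = ξ) :
    Set.EqOn x (fun _ => ξ) (Set.Icc a b) :=
  ODE_solution_unique_of_mem_Icc_left (s := fun _ => Set.univ)
    (fun t ht => (hv t ht).lipschitzOnWith)
    (fun t ht => (hx t ht).continuousAt.continuousWithinAt)
    (fun t ht => (hx t (Set.Ioc_subset_Icc_self ht)).hasDerivWithinAt)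
    (fun _ _ => Set.mem_univ _) continuousOn_const
    (fun t ht => by rw [hξ t ht]; exact hasDerivWithinAt_const _ _ _)
    (fun _ _ => Set.mem_univ _) hb

theorem stmt13_general (n : ℕ) (K α γ M : ℝ)
    (hα : 0 < α)
    (A : ℝ → (EuclideanSpace ℝ (Fin n)) →L[ℝ] (EuclideanSpace ℝ (Fin n)))
    (hAcont : Continuous A) (hAbdd : ∀ t, 0 ≤ t → ‖A t‖ ≤ M)
    (Φ : ℝ → ℝ → ((EuclideanSpace ℝ (Fin n)) →L[ℝ] (EuclideanSpace ℝ (Fin n))))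
    (hΦid : ∀ s, Φ s s = ContinuousLinearMap.id ℝ (EuclideanSpace ℝ (Fin n)))
    (hΦderiv : ∀ s ξ t, HasDerivAt (fun r => Φ r s ξ) (A t (Φ t s ξ)) t)
    (hΦcocycle : ∀ t s r, (Φ t s).comp (Φ s r) = Φ t r)
    (hΦdecay : ∀ s t, 0 ≤ s → s ≤ t → ‖Φ t s‖ ≤ K * Real.exp (-α * (t - s)))
    (f : ℝ → (EuclideanSpace ℝ (Fin n)) → (EuclideanSpace ℝ (Fin n)))
    (hflip : ∀ t u v, 0 ≤ t → ‖f t u - f t v‖ ≤ γ * ‖u - v‖)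
    (y : ℝ → (EuclideanSpace ℝ (Fin n)) → ℝ → (EuclideanSpace ℝ (Fin n)))
    (hyinit : ∀ τ η, y τ η τ = η)
    (hyderiv : ∀ τ η t, 0 ≤ t → HasDerivAt (y τ η) (A t (y τ η t) + f t (y τ η t)) t)
    (ybar : (EuclideanSpace ℝ (Fin n)))
    (hequil : ∀ t, 0 ≤ t → A t ybar + f t ybar = 0) :
    (∀ t, 0 ≤ t →
      ybar - ∫ s in (0:ℝ)..t, Φ t s (f s (y t ybar s)) = Φ t 0 ybar) ∧
    Tendsto (fun t => ybar - ∫ s in (0:ℝ)..t, Φ t s (f s (y t ybar s)))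
      atTop (nhds (0 : (EuclideanSpace ℝ (Fin n)))) := by
  have hΦ1 : ∀ s, Φ s s = 1 := hΦid
  have hstays : ∀ t, Set.EqOn (y t ybar) (fun _ => ybar) (Set.Icc 0 t) := fun t =>
    ODE_solution_eqOn_equilibrium_left (v := fun s x => A s x + f s x)
      (fun s hs => lipschitzWith_clm_add (hAbdd s hs.1.le) (hflip s · · hs.1.le))
      (fun s hs => hyderiv t ybar s hs.1) (fun s hs => hequil s hs.1.le) (hyinit t ybar)
  have hG : ∀ t, 0 ≤ t → ybar - ∫ s in (0:ℝ)..t, Φ t s (f s (y t ybar s)) = Φ t 0 ybar := by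
    intro t ht
    have hint : ∫ s in (0:ℝ)..t, Φ t s (f s (y t ybar s)) =
        -∫ s in (0:ℝ)..t, Φ t s (A s ybar) := by
      rw [← intervalIntegral.integral_neg]
      refine intervalIntegral.integral_congr fun s hs => ?_
      rw [Set.uIcc_of_le ht] at hs
      rw [hstays t hs, eq_neg_of_add_eq_zero_right (hequil s hs.1), map_neg]
    rw [hint, integral_evolution_apply_generator hAcont hΦ1 hΦderiv hΦcocycle, hΦ1]
    simp
  refine ⟨hG, (tendsto_evolution_apply_atTop hα hΦdecay le_rfl ybar).congr' ?_⟩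
  filter_upwards [eventually_ge_atTop 0] with t ht
  exact (hG t ht).symm

theorem stmt13 (n : ℕ) (K α γ μ M : ℝ)
    (hK : 1 ≤ K) (hα : 0 < α) (hγ : 0 < γ) (hμ : 0 < μ) (hM : 0 < M)
    (A : ℝ → (EuclideanSpace ℝ (Fin n)) →L[ℝ] (EuclideanSpace ℝ (Fin n)))
    (hAcont : Continuous A) (hAbdd : ∀ t, 0 ≤ t → ‖A t‖ ≤ M)
    (Φ : ℝ → ℝ → ((EuclideanSpace ℝ (Fin n)) →L[ℝ] (EuclideanSpace ℝ (Fin n))))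
    (hΦid : ∀ s, Φ s s = ContinuousLinearMap.id ℝ (EuclideanSpace ℝ (Fin n)))
    (hΦderiv : ∀ s ξ t, HasDerivAt (fun r => Φ r s ξ) (A t (Φ t s ξ)) t)
    (hΦcocycle : ∀ t s r, (Φ t s).comp (Φ s r) = Φ t r)
    (hΦdecay : ∀ s t, 0 ≤ s → s ≤ t → ‖Φ t s‖ ≤ K * Real.exp (-α * (t - s)))
    (f : ℝ → (EuclideanSpace ℝ (Fin n)) → (EuclideanSpace ℝ (Fin n)))
    (hfcont : Continuous fun p : ℝ × (EuclideanSpace ℝ (Fin n)) => f p.1 p.2)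
    (hflip : ∀ t u v, 0 ≤ t → ‖f t u - f t v‖ ≤ γ * ‖u - v‖)
    (hfbdd : ∀ t u, 0 ≤ t → ‖f t u‖ ≤ μ)
    (hsmall : K * γ / α < 1)
    (y : ℝ → (EuclideanSpace ℝ (Fin n)) → ℝ → (EuclideanSpace ℝ (Fin n)))
    (hyinit : ∀ τ η, y τ η τ = η)
    (hyderiv : ∀ τ η t, 0 ≤ t → HasDerivAt (y τ η) (A t (y τ η t) + f t (y τ η t)) t)
    (ybar : (EuclideanSpace ℝ (Fin n))) (hne : ybar ≠ 0)
    (hequil : ∀ t, 0 ≤ t → A t ybar + f t ybar = 0) :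
    (∀ t, 0 ≤ t →
      ybar - ∫ s in (0:ℝ)..t, Φ t s (f s (y t ybar s)) = Φ t 0 ybar) ∧
    Tendsto (fun t => ybar - ∫ s in (0:ℝ)..t, Φ t s (f s (y t ybar s)))
      atTop (nhds (0 : (EuclideanSpace ℝ (Fin n)))) :=
  stmt13_general n K α γ M hα A hAcont hAbdd Φ hΦid hΦderiv hΦcocycle hΦdecay f hflip y hyinit
    hyderiv ybar hequil
end

section
/- The scalar equation y' = −y + (1/5)(π/2 − arctan(|t| + |y|)) on ℝ⁺ satisfies hypotheses (P1)–(P3) with K = M = α = 1, γ = 1/5, μ = π/5 (so Kγ/α < 1), yet it has no equilibrium: there is no constant ȳ ∈ ℝ with −ȳ + (1/5)(π/2 − arctan(|t| + |ȳ|)) = 0 for all t ≥ 0. -/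
open Real MeasureTheory Filter Topology

lemma arctan_lip (a b : ℝ) : |Real.arctan a - Real.arctan b| ≤ |a - b| := by
  have hL : LipschitzWith 1 Real.arctan := by
    apply lipschitzWith_of_nnnorm_deriv_le Real.differentiable_arctan
    intro x
    rw [Real.deriv_arctan]
    have hx : (0:ℝ) < 1 + x ^ 2 := by positivity
    have : |1 / (1 + x ^ 2)| ≤ 1 := by
      rw [abs_of_pos (by positivity)]
      rw [div_le_one hx]; nlinarith
    have : ‖1 / (1 + x ^ 2)‖ ≤ (1:ℝ) := by simpa [Real.norm_eq_abs, abs_inv, one_div] using this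
    exact_mod_cast this
  have := hL.dist_le_mul a b
  simpa [Real.dist_eq] using this

theorem stmt19 :
    (∀ t u v : ℝ,
      |(1 / 5) * (Real.pi / 2 - Real.arctan (|t| + |u|)) -
        (1 / 5) * (Real.pi / 2 - Real.arctan (|t| + |v|))| ≤ (1 / 5) * |u - v|) ∧
    (∀ t u : ℝ, |(1 / 5) * (Real.pi / 2 - Real.arctan (|t| + |u|))| ≤ Real.pi / 5) ∧
    ((1 : ℝ) * (1 / 5) / 1 < 1) ∧
    ¬ ∃ ybar : ℝ, ∀ t, 0 ≤ t →
      -ybar + (1 / 5) * (Real.pi / 2 - Real.arctan (|t| + |ybar|)) = 0 := by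
  refine ⟨?_, ?_, by norm_num, ?_⟩
  · intro t u v
    have h1 : |Real.arctan (|t| + |u|) - Real.arctan (|t| + |v|)| ≤ |(|u| - |v|)| := by
      have := arctan_lip (|t| + |u|) (|t| + |v|)
      simpa using this
    have h2 : |(|u| - |v|)| ≤ |u - v| := abs_abs_sub_abs_le_abs_sub u v
    calc |(1 / 5) * (Real.pi / 2 - Real.arctan (|t| + |u|)) -
        (1 / 5) * (Real.pi / 2 - Real.arctan (|t| + |v|))|
        = (1/5) * |Real.arctan (|t| + |u|) - Real.arctan (|t| + |v|)| := by
          rw [← mul_sub, show Real.pi / 2 - Real.arctan (|t| + |u|) -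
            (Real.pi / 2 - Real.arctan (|t| + |v|)) =
            -(Real.arctan (|t| + |u|) - Real.arctan (|t| + |v|)) from by ring,
            abs_mul, abs_neg]
          norm_num
      _ ≤ (1/5) * |u - v| := by nlinarith
  · intro t u
    have h0 : 0 ≤ Real.arctan (|t| + |u|) := by simpa using Real.arctan_strictMono.monotone (by positivity : (0:ℝ) ≤ |t| + |u|)
    have h1 : Real.arctan (|t| + |u|) < Real.pi / 2 := Real.arctan_lt_pi_div_two _
    have hpi := Real.pi_pos
    rw [abs_of_nonneg (by nlinarith)]
    nlinarith
  · rintro ⟨y, hy⟩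
    have h0 := hy 0 le_rfl
    have h1 := hy 1 zero_le_one
    simp only [abs_zero, abs_one, zero_add] at h0 h1
    have : Real.arctan |y| = Real.arctan (1 + |y|) := by nlinarith
    have hlt : Real.arctan |y| < Real.arctan (1 + |y|) :=
      Real.arctan_strictMono (by linarith)
    linarith
end
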